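/- arXiv:2202.06844 — 3 statements merged into one kernel-verified Lean document; each statement's English description precedes it below -/
import Mathlib

section
/- For c ∈ (0,1) and a ≠ 0 with a·c not a multiple of 2π, the map h is not of the form (z₁, z₂) ↦ (q₁(z_{π(1)}), q₂(z_{π(2)})) for any permutation π of {1,2} and functions q₁, q₂ : ℝ → ℝ. -/
open MeasureTheory Complex Set

noncomputable def h (a c : ℝ) (z : ℂ) : ℂ :=
  if ‖z‖ ≤ c then z * Complex.exp ((a * (‖z‖ - c)) * Complex.I) else z

noncomputable def coord (z : ℂ) : Fin 2 → ℝ := ![z.re, z.im]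

/-! Outside the disc of radius `c` the map `h` is the identity. A coordinatewise map that is the
identity there cannot swap the coordinates (`q 0 0` would equal every large real `t`), and each
`q j` is the identity, read off on a line `z_j = x` escaping the disc; so it is the identity
everywhere. But `h` rotates `c / 2` by the angle `-a c / 2 ∉ 2πℤ`. -/

theorem h_eq_self_of_lt_norm {a c : ℝ} {z : ℂ} (hz : c < ‖z‖) : h a c z = z := by
  rw [h, if_neg hz.not_ge]

theorem h_ne_self {a c : ℝ} {z : ℂ} (hz0 : z ≠ 0) (hzc : ‖z‖ ≤ c)
    (hangle : ∀ k : ℤ, a * (‖z‖ - c) ≠ 2 * Real.pi * k) : h a c z ≠ z := by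
  rw [h, if_pos hzc, Ne, mul_eq_left₀ hz0, Complex.exp_eq_one_iff]
  rintro ⟨k, hk⟩
  refine hangle k ?_
  simpa [mul_comm] using congrArg Complex.im hk

theorem eq_self_of_coordinatewise_of_eq_self_outside {g : ℂ → ℂ} {c : ℝ}
    (hg : ∀ z, c < ‖z‖ → g z = z) {π : Equiv.Perm (Fin 2)} {q : Fin 2 → ℝ → ℝ}
    (hq : ∀ (z : ℂ) (j : Fin 2), coord (g z) j = q j (coord z (π j))) (z : ℂ) : g z = z := by
  set R := |c| + 1
  have outside_of_re {w : ℂ} (hw : R ≤ |w.re|) : c < ‖w‖ := by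
    linarith [le_abs_self c, abs_re_le_norm w]
  have outside_of_im {w : ℂ} (hw : R ≤ |w.im|) : c < ‖w‖ := by
    linarith [le_abs_self c, abs_im_le_norm w]
  have hπ0 : π 0 = 0 := by
    by_contra hne
    have hπ0 : π 0 = 1 := by omega
    have q_real {t : ℝ} (ht : R ≤ t) : q 0 0 = t := by
      have hout : c < ‖(t : ℂ)‖ := outside_of_re (by simpa using ht.trans (le_abs_self t))
      simpa [coord, hπ0, hg _ hout] using (hq t 0).symm
    linarith [q_real le_rfl, q_real (le_add_of_nonneg_right zero_le_one)]
  have hπ1 : π 1 = 1 := by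
    have : π 1 ≠ 0 := hπ0 ▸ π.injective.ne (by decide)
    omega
  have hq0 (x : ℝ) : q 0 x = x := by
    have hout : c < ‖(⟨x, R⟩ : ℂ)‖ := outside_of_im (le_abs_self R)
    simpa [coord, hπ0, hg _ hout] using (hq ⟨x, R⟩ 0).symm
  have hq1 (x : ℝ) : q 1 x = x := by
    have hout : c < ‖(⟨R, x⟩ : ℂ)‖ := outside_of_re (le_abs_self R)
    simpa [coord, hπ1, hg _ hout] using (hq ⟨R, x⟩ 1).symm
  apply Complex.ext
  · simpa [coord, hπ0, hq0] using hq z 0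
  · simpa [coord, hπ1, hq1] using hq z 1

theorem h_not_coordinatewise_general (a c : ℝ) (hc : 0 < c)
    (hac : ∀ k : ℤ, a * c ≠ 2 * Real.pi * k) :
    ¬ ∃ (π : Equiv.Perm (Fin 2)) (q : Fin 2 → ℝ → ℝ),
        ∀ (z : ℂ) (j : Fin 2), coord (h a c z) j = q j (coord z (π j)) := by
  rintro ⟨π, q, hq⟩
  have hnorm : ‖((c / 2 : ℝ) : ℂ)‖ = c / 2 := by simp [abs_of_pos hc]
  refine h_ne_self (z := ((c / 2 : ℝ) : ℂ)) (by exact_mod_cast (half_pos hc).ne') (by linarith)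
    (fun k hk => hac (-2 * k) ?_)
    (eq_self_of_coordinatewise_of_eq_self_outside (fun _ => h_eq_self_of_lt_norm) hq _)
  rw [hnorm] at hk
  push_cast
  linarith

theorem h_not_coordinatewise (a c : ℝ) (hc : 0 < c) (hc1 : c < 1) (ha : a ≠ 0)
    (hac : ∀ k : ℤ, a * c ≠ 2 * Real.pi * k) :
    ¬ ∃ (π : Equiv.Perm (Fin 2)) (q : Fin 2 → ℝ → ℝ),
        ∀ (z : ℂ) (j : Fin 2), coord (h a c z) j = q j (coord z (π j)) :=
  h_not_coordinatewise_general a c hc hac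
end

section
/- If g : ℝ² → ℝ² satisfies g(z)₁ = q₁(z₁) for some function q₁ (first coordinate depends only on first coordinate), and h is the radius-dependent rotation with parameters c ∈ (0,1), a with 0 < |a·c| < π, then g ≠ h. -/
open MeasureTheory Complex Set

/-! On the imaginary axis the first coordinate of `h` is `-t sin (a (t - c))`, which is nonzero at
`t = c / 2` because `0 < |a c / 2| < π`; but `h 0 = 0`, and `0` and `c / 2 * I` have the same first
coordinate, so no function of the first coordinate alone can give the first coordinate of `h`. -/

theorem Real.sin_ne_zero_of_abs_pos_of_abs_lt_pi {θ : ℝ} (h₀ : 0 < |θ|) (hπ : |θ| < Real.pi) :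
    Real.sin θ ≠ 0 := by
  obtain ⟨hlo, hhi⟩ := abs_lt.mp hπ
  rw [Ne, Real.sin_eq_zero_iff_of_lt_of_lt hlo hhi]
  exact abs_pos.mp h₀

theorem re_eq_of_re_factors {g : ℂ → ℂ} {q₁ : ℝ → ℝ} (hg : ∀ z : ℂ, (g z).re = q₁ z.re)
    {z w : ℂ} (hzw : z.re = w.re) : (g z).re = (g w).re := by
  rw [hg, hg, hzw]

theorem h_zero (a c : ℝ) : h a c 0 = 0 := by
  unfold h
  split_ifs <;> simp

theorem h_ofReal_mul_I_re {a c t : ℝ} (ht : 0 ≤ t) (htc : t ≤ c) :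
    (h a c (t * I)).re = -(t * Real.sin (a * (t - c))) := by
  have hnorm : ‖(t : ℂ) * I‖ = t := by simp [abs_of_nonneg ht]
  have harg : (a : ℂ) * ((t : ℂ) - c) * I = ((a * (t - c) : ℝ) : ℂ) * I := by push_cast; ring
  rw [h, hnorm, if_pos htc, harg, exp_mul_I]
  generalize a * (t - c) = θ
  simp [mul_re, cos_ofReal_re, sin_ofReal_re]

theorem h_half_mul_I_re_ne_zero {a c : ℝ} (hc : 0 < c) (ha : 0 < |a * c|)
    (ha2 : |a * c| < Real.pi) : (h a c ((c / 2 : ℝ) * I)).re ≠ 0 := by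
  rw [h_ofReal_mul_I_re (by positivity) (by linarith)]
  have hθ : a * (c / 2 - c) = -(a * c / 2) := by ring
  have hθabs : |a * (c / 2 - c)| = |a * c| / 2 := by
    rw [hθ, abs_neg, abs_div, abs_two]
  have hsin : Real.sin (a * (c / 2 - c)) ≠ 0 :=
    Real.sin_ne_zero_of_abs_pos_of_abs_lt_pi (by rw [hθabs]; positivity) (by rw [hθabs]; linarith)
  exact neg_ne_zero.mpr (mul_ne_zero (by positivity) hsin)

theorem h_first_coord_dependent_general (a c : ℝ) (hc : 0 < c)
    (ha : 0 < |a * c|) (ha2 : |a * c| < Real.pi)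
    (g : ℂ → ℂ) (q₁ : ℝ → ℝ) (hg : ∀ z : ℂ, (g z).re = q₁ z.re) :
    g ≠ h a c := by
  rintro rfl
  have hsame : (h a c ((c / 2 : ℝ) * I)).re = (h a c 0).re :=
    re_eq_of_re_factors hg (by simp)
  rw [h_zero, zero_re] at hsame
  exact h_half_mul_I_re_ne_zero hc ha ha2 hsame

theorem h_first_coord_dependent (a c : ℝ) (hc : 0 < c) (hc1 : c < 1)
    (ha : 0 < |a * c|) (ha2 : |a * c| < Real.pi)
    (g : ℂ → ℂ) (q₁ : ℝ → ℝ) (hg : ∀ z : ℂ, (g z).re = q₁ z.re) :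
    g ≠ h a c :=
  h_first_coord_dependent_general a c hc ha ha2 g q₁ hg
end

section
/- The pushforward of the uniform measure on the closed disk of radius c under the rotation-by-angle-a(r−c) map h equals the uniform measure on that disk. -/
/-!
In polar coordinates `z = r e^{iθ}` the map `h a c` is the shear `(r, θ) ↦ (r, θ + φ r)` with
`φ r = a (min r c - c)`. The polar density `r dr dθ` does not depend on `θ`, and a translation
preserves the Lebesgue integral of a `2π`-periodic function over a period, so `h a c` preserves
Lebesgue measure on `ℂ`. Since it also preserves `‖z‖`, it maps the disk onto itself and hence
preserves the normalized restriction of Lebesgue measure to it.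
-/

open MeasureTheory Complex Set

open Function
open scoped Real ENNReal

theorem Function.Periodic.setLIntegral_Ioo_comp_add_right {g : ℝ → ℝ≥0∞} {T : ℝ}
    (hg : Periodic g T) (hT : 0 < T) (t s : ℝ) :
    ∫⁻ θ in Ioo t (t + T), g (θ + s) = ∫⁻ θ in Ioo t (t + T), g θ := by
  have : Fact (0 < T) := ⟨hT⟩
  simp_rw [setLIntegral_congr Ioo_ae_eq_Ioc, ← hg.lift_coe]
  calc ∫⁻ θ in Ioc t (t + T), hg.lift ((θ + s : ℝ) : AddCircle T)
      = ∫⁻ x : AddCircle T, hg.lift (x + s) := AddCircle.lintegral_preimage T t (hg.lift <| · + s)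
    _ = ∫⁻ x : AddCircle T, hg.lift x := lintegral_add_right_eq_self _ _
    _ = ∫⁻ θ in Ioc t (t + T), hg.lift (θ : AddCircle T) := (AddCircle.lintegral_preimage T t _).symm

theorem setLIntegral_prod_Ioo_comp_shear {F : ℝ × ℝ → ℝ≥0∞} (hF : Measurable F) {ψ : ℝ → ℝ}
    (hψ : Measurable ψ) {T : ℝ} (hT : 0 < T) (hper : ∀ r θ, F (r, θ + T) = F (r, θ))
    (s : Set ℝ) (t : ℝ) :
    ∫⁻ p in s ×ˢ Ioo t (t + T), F (p.1, p.2 + ψ p.1) = ∫⁻ p in s ×ˢ Ioo t (t + T), F p := by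
  rw [Measure.volume_eq_prod, ← Measure.prod_restrict, lintegral_prod _ (by fun_prop),
    lintegral_prod _ hF.aemeasurable]
  congr 1 with r
  exact Periodic.setLIntegral_Ioo_comp_add_right (g := fun θ => F (r, θ)) (hper r) hT t (ψ r)

noncomputable def radialTwist (φ : ℝ → ℝ) (z : ℂ) : ℂ := z * exp (φ ‖z‖ * I)

section RadialTwist

variable {φ : ℝ → ℝ}

@[simp]
theorem norm_radialTwist (z : ℂ) : ‖radialTwist φ z‖ = ‖z‖ := by
  simp [radialTwist, norm_exp]

theorem measurable_radialTwist (hφ : Measurable φ) : Measurable (radialTwist φ) := by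
  unfold radialTwist; fun_prop

theorem radialTwist_polarCoord_symm {r : ℝ} (hr : 0 ≤ r) (θ : ℝ) :
    radialTwist φ (Complex.polarCoord.symm (r, θ)) = Complex.polarCoord.symm (r, θ + φ r) := by
  rw [radialTwist, norm_polarCoord_symm, abs_of_nonneg hr]
  simp only [Complex.polarCoord_symm_apply]
  push_cast
  rw [← Complex.exp_mul_I, ← Complex.exp_mul_I, mul_assoc, ← Complex.exp_add]
  ring_nf

theorem lintegral_comp_radialTwist (hφ : Measurable φ) {f : ℂ → ℝ≥0∞} (hf : Measurable f) :
    ∫⁻ z, f (radialTwist φ z) = ∫⁻ z, f z := by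
  set F : ℝ × ℝ → ℝ≥0∞ := fun p => ENNReal.ofReal p.1 • f (Complex.polarCoord.symm p)
  have hF : Measurable F := by
    simp only [F, Complex.polarCoord_symm_apply]
    fun_prop
  have hper : ∀ r θ, F (r, θ + 2 * π) = F (r, θ) := by
    simp [F, Complex.cos_add_two_pi, Complex.sin_add_two_pi]
  have htarget : Complex.polarCoord.target = Ioi 0 ×ˢ Ioo (-π) (-π + 2 * π) := by
    rw [Complex.polarCoord_target]; ring_nf
  calc ∫⁻ z, f (radialTwist φ z)
      = ∫⁻ p in Complex.polarCoord.target, F (p.1, p.2 + φ p.1) := by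
        rw [← Complex.lintegral_comp_polarCoord_symm]
        refine setLIntegral_congr_fun Complex.polarCoord.open_target.measurableSet fun p hp => ?_
        simp only [F, ← radialTwist_polarCoord_symm hp.1.le]
    _ = ∫⁻ p in Complex.polarCoord.target, F p := by
        rw [htarget]
        exact setLIntegral_prod_Ioo_comp_shear hF hφ Real.two_pi_pos hper _ _
    _ = ∫⁻ z, f z := Complex.lintegral_comp_polarCoord_symm f

theorem measurePreserving_radialTwist (hφ : Measurable φ) :
    MeasurePreserving (radialTwist φ) volume volume := by
  refine ⟨measurable_radialTwist hφ, Measure.ext_of_lintegral _ fun f hf => ?_⟩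
  rw [lintegral_map hf (measurable_radialTwist hφ), lintegral_comp_radialTwist hφ hf]

end RadialTwist

theorem h_eq_radialTwist (a c : ℝ) : h a c = radialTwist (fun r => a * (min r c - c)) := by
  ext1 z
  rcases le_or_gt ‖z‖ c with hz | hz
  · simp [h, radialTwist, hz]
  · simp [h, radialTwist, hz.not_ge, hz.le]

theorem h_pushforward_uniform_disk_general (a c : ℝ)
    (μ : Measure ℂ)
    (hμ : μ = (volume (Metric.closedBall (0 : ℂ) c))⁻¹ •
        volume.restrict (Metric.closedBall (0 : ℂ) c)) :
    Measure.map (h a c) μ = μ := by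
  have hpres : MeasurePreserving (h a c) volume volume := by
    rw [h_eq_radialTwist]
    exact measurePreserving_radialTwist (by fun_prop)
  have hball : h a c ⁻¹' Metric.closedBall 0 c = Metric.closedBall 0 c := by
    ext z
    simp [h_eq_radialTwist]
  have hdisk :=
    (hpres.restrict_preimage (s := Metric.closedBall 0 c) measurableSet_closedBall).map_eq
  rw [hball] at hdisk
  rw [hμ, Measure.map_smul, hdisk]

theorem h_pushforward_uniform_disk (a c : ℝ) (hc : 0 < c)
    (μ : Measure ℂ)
    (hμ : μ = (volume (Metric.closedBall (0 : ℂ) c))⁻¹ •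
        volume.restrict (Metric.closedBall (0 : ℂ) c)) :
    Measure.map (h a c) μ = μ :=
  h_pushforward_uniform_disk_general a c μ hμ
end
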